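/- For all matrices A ∈ M_{m,n}(R_max), B ∈ M_{n,k}(R_max), the determinantal rank of the max-plus matrix product satisfies rk_det(AB) ≤ min(rk_det(A), rk_det(B)), where rk_det(M) is the largest size of a square submatrix M' with |M'|⁺ ≠ |M'|⁻. -/

import Mathlib

open scoped Classical

noncomputable section

/-- Positive determinant over `R_max = (ℝ ∪ {-∞}, max, +)` (modelled by `WithBot ℝ`):
maximum over even permutations `σ` of `Σ_i m_{iσ(i)}`. -/
def detp {k : ℕ} (M : Matrix (Fin k) (Fin k) (WithBot ℝ)) : WithBot ℝ :=
  (Finset.univ.filter fun σ : Equiv.Perm (Fin k) => Equiv.Perm.sign σ = 1).sup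
    fun σ => ∑ i, M i (σ i)

/-- Negative determinant over `R_max`: maximum over odd permutations. -/
def detm {k : ℕ} (M : Matrix (Fin k) (Fin k) (WithBot ℝ)) : WithBot ℝ :=
  (Finset.univ.filter fun σ : Equiv.Perm (Fin k) => Equiv.Perm.sign σ = -1).sup
    fun σ => ∑ i, M i (σ i)

/-- The determinantal rank of `A`: the largest `k` such that `A` has a `k×k`
submatrix `M` with `|M|⁺ ≠ |M|⁻`. -/
def detRank {m n : ℕ} (A : Matrix (Fin m) (Fin n) (WithBot ℝ)) : ℕ :=
  sSup {k | ∃ (r : Fin k → Fin m) (c : Fin k → Fin n),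
    Function.Injective r ∧ Function.Injective c ∧
    detp (fun a b => A (r a) (c b)) ≠ detm (fun a b => A (r a) (c b))}

/-- Max-plus matrix product: `(AB)_{ij} = max_l (a_{il} + b_{lj})`. -/
def mpMul {m k n : ℕ} (A : Matrix (Fin m) (Fin k) (WithBot ℝ))
    (B : Matrix (Fin k) (Fin n) (WithBot ℝ)) : Matrix (Fin m) (Fin n) (WithBot ℝ) :=
  fun i j => Finset.univ.sup fun l => A i l + B l j


/-!
A `k × k` minor of the max-plus product `AB` expands as the max of the terms
`∑ᵢ a_{i f(i)} + ∑ᵢ b_{f(i) σ(i)}` over maps `f` into the inner index set and permutations `σ`,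
the terms with `σ` even giving `|·|⁺` and those with `σ` odd giving `|·|⁻` (max-plus
Binet–Cauchy). A term is dominated by a term of the opposite parity unless `f` is injective and
the minors of `A` on the columns `f` and of `B` on the rows `f` are both unbalanced: if `f` is
not injective, compose `σ` with a transposition of two indices with the same image; if the minor
of `A` is balanced, exchange the `A`-part for `∑ᵢ a_{i f(π i)}` with `π` odd and reindex the
`B`-part by `π`; if the minor of `B` is balanced, exchange the `B`-part directly. Hence an
unbalanced minor of `AB` yields unbalanced minors of `A` and of `B` of the same size.
-/

open Finset Equiv

section SumSup

variable {α : Type*} [AddCommMonoid α] [LinearOrder α] [IsOrderedAddMonoid α]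

theorem WithBot.finset_sup_add {ι : Type*} (s : Finset ι) (f : ι → WithBot α) (a : WithBot α) :
    s.sup f + a = s.sup fun i => f i + a :=
  apply_sup_eq_sup_comp_of_linearOrder (· + a) (fun _ _ h => by dsimp only; gcongr)
    (WithBot.bot_add a)

theorem WithBot.add_finset_sup {ι : Type*} (s : Finset ι) (f : ι → WithBot α) (a : WithBot α) :
    a + s.sup f = s.sup fun i => a + f i :=
  apply_sup_eq_sup_comp_of_linearOrder (a + ·) (fun _ _ h => by dsimp only; gcongr)
    (WithBot.add_bot a)

theorem WithBot.sum_sup_eq_sup_sum {ι κ : Type*} [Fintype ι] [DecidableEq ι] [Fintype κ]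
    (g : ι → κ → WithBot α) :
    ∑ i, univ.sup (g i) = univ.sup fun f : ι → κ => ∑ i, g i (f i) := by
  refine le_antisymm ?_ (Finset.sup_le fun f _ => sum_le_sum fun i _ => le_sup (mem_univ (f i)))
  by_cases hattained : ∀ i, ∃ l, univ.sup (g i) = g i l
  · choose f hf using hattained
    calc ∑ i, univ.sup (g i) = ∑ i, g i (f i) := sum_congr rfl fun i _ => hf i
      _ ≤ _ := le_sup (f := fun f : ι → κ => ∑ i, g i (f i)) (mem_univ f)
  · push Not at hattained
    obtain ⟨i, hi⟩ := hattained
    have : IsEmpty κ := ⟨fun l => by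
      obtain ⟨l', -, hl'⟩ := exists_mem_eq_sup univ ⟨l, mem_univ l⟩ (g i)
      exact hi l' hl'⟩
    have hbot : ∑ i, univ.sup (g i) = ⊥ :=
      WithBot.sum_eq_bot_iff.2 ⟨i, mem_univ i, by simp [univ_eq_empty]⟩
    exact hbot ▸ bot_le

end SumSup

-- `detp M` and `detm M` are `signedDet M 1` and `signedDet M (-1)` by definition.
def signedDet {k : ℕ} (M : Matrix (Fin k) (Fin k) (WithBot ℝ)) (s : ℤˣ) : WithBot ℝ :=
  (univ.filter fun σ : Perm (Fin k) => Perm.sign σ = s).sup fun σ => ∑ i, M i (σ i)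

section SignedDet

variable {k : ℕ} (M : Matrix (Fin k) (Fin k) (WithBot ℝ))

theorem sum_le_signedDet_sign (σ : Perm (Fin k)) : ∑ i, M i (σ i) ≤ signedDet M (Perm.sign σ) :=
  le_sup (f := fun σ : Perm (Fin k) => ∑ i, M i (σ i)) (by simp)

variable {M} in
theorem signedDet_neg_of_detp_eq_detm (h : detp M = detm M) (s : ℤˣ) :
    signedDet M (-s) = signedDet M s := by
  rcases Int.units_eq_one_or s with rfl | rfl
  · exact h.symm
  · rw [neg_neg]
    exact h

end SignedDet

section MpMul

variable {k n : ℕ} (A : Matrix (Fin k) (Fin n) (WithBot ℝ)) (B : Matrix (Fin n) (Fin k) (WithBot ℝ))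

theorem signedDet_mpMul (s : ℤˣ) :
    signedDet (mpMul A B) s = (univ.filter fun σ : Perm (Fin k) => Perm.sign σ = s).sup
      fun σ => univ.sup fun f : Fin k → Fin n => ∑ i, A i (f i) + ∑ i, B (f i) (σ i) := by
  refine Finset.sup_congr rfl fun σ _ => ?_
  simp only [mpMul, ← sum_add_distrib]
  exact WithBot.sum_sup_eq_sup_sum fun i l => A i l + B l (σ i)

variable {A B}

theorem le_signedDet_mpMul {s : ℤˣ} {σ : Perm (Fin k)} (hσ : Perm.sign σ = s) (f : Fin k → Fin n) :
    ∑ i, A i (f i) + ∑ i, B (f i) (σ i) ≤ signedDet (mpMul A B) s := by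
  rw [signedDet_mpMul]
  exact (le_sup (f := fun f : Fin k → Fin n => ∑ i, A i (f i) + ∑ i, B (f i) (σ i))
    (mem_univ f)).trans (le_sup (f := fun σ : Perm (Fin k) => univ.sup fun f : Fin k → Fin n =>
      ∑ i, A i (f i) + ∑ i, B (f i) (σ i)) (by simp [hσ]))

-- Reindexing the `B`-part by an odd `π` turns this into the term of `(σ * π, f ∘ π)`.
theorem sum_comp_add_sum_le_signedDet_mpMul_neg {π : Perm (Fin k)} (hπ : Perm.sign π = -1)
    (σ : Perm (Fin k)) (f : Fin k → Fin n) :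
    ∑ i, A i (f (π i)) + ∑ i, B (f i) (σ i) ≤ signedDet (mpMul A B) (-Perm.sign σ) := by
  rw [← Equiv.sum_comp π fun i => B (f i) (σ i)]
  exact le_signedDet_mpMul (σ := σ * π) (by simp [hπ]) (f ∘ π)

theorem sum_add_sum_le_signedDet_mpMul_neg_of_not_injective {f : Fin k → Fin n}
    (hf : ¬Function.Injective f) (σ : Perm (Fin k)) :
    ∑ i, A i (f i) + ∑ i, B (f i) (σ i) ≤ signedDet (mpMul A B) (-Perm.sign σ) := by
  obtain ⟨i, j, hfij, hij⟩ := Function.not_injective_iff.mp hf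
  have hswap : ∀ x, f (swap i j x) = f x := fun x => by
    rw [swap_apply_def]; split_ifs <;> simp_all
  simpa only [hswap] using
    sum_comp_add_sum_le_signedDet_mpMul_neg (Perm.sign_swap hij) σ f

theorem sum_add_sum_le_signedDet_mpMul_neg_of_detp_eq_detm_left {f : Fin k → Fin n}
    (h : detp (A.submatrix id f) = detm (A.submatrix id f)) (σ : Perm (Fin k)) :
    ∑ i, A i (f i) + ∑ i, B (f i) (σ i) ≤ signedDet (mpMul A B) (-Perm.sign σ) := by
  have hA : ∑ i, A i (f i) ≤ signedDet (A.submatrix id f) (-1) := by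
    rw [signedDet_neg_of_detp_eq_detm h]
    simpa using sum_le_signedDet_sign (A.submatrix id f) 1
  calc ∑ i, A i (f i) + ∑ i, B (f i) (σ i)
      ≤ signedDet (A.submatrix id f) (-1) + ∑ i, B (f i) (σ i) := by gcongr
    _ ≤ _ := by
      rw [signedDet, WithBot.finset_sup_add]
      exact Finset.sup_le fun π hπ =>
        sum_comp_add_sum_le_signedDet_mpMul_neg (mem_filter.mp hπ).2 σ f

theorem sum_add_sum_le_signedDet_mpMul_neg_of_detp_eq_detm_right {f : Fin k → Fin n}
    (h : detp (B.submatrix f id) = detm (B.submatrix f id)) (σ : Perm (Fin k)) :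
    ∑ i, A i (f i) + ∑ i, B (f i) (σ i) ≤ signedDet (mpMul A B) (-Perm.sign σ) := by
  have hB : ∑ i, B (f i) (σ i) ≤ signedDet (B.submatrix f id) (-Perm.sign σ) := by
    rw [signedDet_neg_of_detp_eq_detm h]
    exact sum_le_signedDet_sign (B.submatrix f id) σ
  calc ∑ i, A i (f i) + ∑ i, B (f i) (σ i)
      ≤ ∑ i, A i (f i) + signedDet (B.submatrix f id) (-Perm.sign σ) := by gcongr
    _ ≤ _ := by
      rw [signedDet, WithBot.add_finset_sup]
      exact Finset.sup_le fun ρ hρ => le_signedDet_mpMul (mem_filter.mp hρ).2 f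

theorem detp_mpMul_eq_detm
    (H : ∀ f : Fin k → Fin n, Function.Injective f →
      detp (A.submatrix id f) = detm (A.submatrix id f) ∨
      detp (B.submatrix f id) = detm (B.submatrix f id)) :
    detp (mpMul A B) = detm (mpMul A B) := by
  have hle : ∀ s, signedDet (mpMul A B) s ≤ signedDet (mpMul A B) (-s) := fun s => by
    rw [signedDet_mpMul]
    refine Finset.sup_le fun σ hσ => Finset.sup_le fun f _ => ?_
    rw [← (mem_filter.mp hσ).2]
    by_cases hf : Function.Injective f
    · rcases H f hf with hA | hB
      · exact sum_add_sum_le_signedDet_mpMul_neg_of_detp_eq_detm_left hA σ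
      · exact sum_add_sum_le_signedDet_mpMul_neg_of_detp_eq_detm_right hB σ
    · exact sum_add_sum_le_signedDet_mpMul_neg_of_not_injective hf σ
  exact (hle 1).antisymm (by simpa using hle (-1))

theorem exists_injective_detp_ne_detm_of_mpMul (h : detp (mpMul A B) ≠ detm (mpMul A B)) :
    ∃ f : Fin k → Fin n, Function.Injective f ∧
      detp (A.submatrix id f) ≠ detm (A.submatrix id f) ∧
      detp (B.submatrix f id) ≠ detm (B.submatrix f id) := by
  contrapose! h
  exact detp_mpMul_eq_detm fun f hf => or_iff_not_imp_left.2 (h f hf)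

end MpMul

theorem le_detRank {m n k : ℕ} {A : Matrix (Fin m) (Fin n) (WithBot ℝ)} {r : Fin k → Fin m}
    {c : Fin k → Fin n} (hr : Function.Injective r) (hc : Function.Injective c)
    (h : detp (A.submatrix r c) ≠ detm (A.submatrix r c)) : k ≤ detRank A :=
  le_csSup ⟨m, fun _ ⟨_, _, hr', _⟩ => Fin.le_of_injective _ hr'⟩ ⟨r, c, hr, hc, h⟩

/-- Rank-product inequality for the determinantal rank:
`rk_det(AB) ≤ min(rk_det(A), rk_det(B))`. -/
theorem detRank_mul_le {m n k : ℕ} (A : Matrix (Fin m) (Fin n) (WithBot ℝ))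
    (B : Matrix (Fin n) (Fin k) (WithBot ℝ)) :
    detRank (mpMul A B) ≤ min (detRank A) (detRank B) := by
  refine csSup_le' ?_
  rintro l ⟨r, c, hr, hc, h⟩
  -- the `r × c` minor of `mpMul A B` is `mpMul (A.submatrix r id) (B.submatrix id c)` by definition
  obtain ⟨f, hf, hA, hB⟩ :=
    exists_injective_detp_ne_detm_of_mpMul (A := A.submatrix r id) (B := B.submatrix id c) h
  exact le_min (le_detRank hr hf hA) (le_detRank hf hc hB)
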